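/- arXiv:1310.7713 — 3 statements merged into one kernel-verified Lean document; each statement's English description precedes it below -/
import Mathlib

section
/- Fix t > 0. Assume that lim_{x→−∞} P(t,x) = 0 (equivalently, ∫_{−∞}^0 u(t,y) dy = 0). Then the following two statements are equivalent: (i) ∫_ℝ u(t,x) dx = 0; (ii) (d/dt) ∫_ℝ u(t,x)² dx + 2ε ∫_ℝ (∂ₓu(t,x))² dx = 0. -/
open MeasureTheory Filter intervalIntegral

/-- `P u t x = ∫₀ˣ u(t,y) dy`. -/
noncomputable def Pfun (u : ℝ → ℝ → ℝ) (t x : ℝ) : ℝ := ∫ y in (0:ℝ)..x, u t y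

/-- A continuous real function with finite limits at `±∞` is bounded. -/
lemma exists_bound_of_tendsto {f : ℝ → ℝ} (hc : Continuous f) {a b : ℝ}
    (htop : Tendsto f atTop (nhds a)) (hbot : Tendsto f atBot (nhds b)) :
    ∃ C, ∀ x, ‖f x‖ ≤ C := by
  have h1 : ∀ᶠ x in atTop, |f x| ≤ |a| + 1 :=
    htop.abs.eventually (eventually_le_nhds (lt_add_one |a|))
  have h2 : ∀ᶠ x in atBot, |f x| ≤ |b| + 1 :=
    hbot.abs.eventually (eventually_le_nhds (lt_add_one |b|))
  obtain ⟨A, hA⟩ := h1.exists_forall_of_atTop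
  obtain ⟨B, hB⟩ := h2.exists_forall_of_atBot
  obtain ⟨C, hC⟩ := (isCompact_Icc (a := B) (b := A)).exists_bound_of_continuousOn
    hc.continuousOn
  refine ⟨max C (max (|a| + 1) (|b| + 1)), fun x => ?_⟩
  rcases le_total x B with hx | hx
  · exact le_trans (by simpa using hB x hx) (le_max_of_le_right (le_max_right _ _))
  rcases le_total A x with hx' | hx'
  · exact le_trans (by simpa using hA x hx') (le_max_of_le_right (le_max_left _ _))
  · exact le_trans (hC x ⟨hx, hx'⟩) (le_max_left _ _)

lemma bdd_mul_integrable {f g : ℝ → ℝ} (hg : Integrable g)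
    (hf : AEStronglyMeasurable f volume) (hb : ∃ C, ∀ x, ‖f x‖ ≤ C) :
    Integrable (fun x => f x * g x) := by
  obtain ⟨C, hC⟩ := hb
  exact hg.bdd_mul hf (Eventually.of_forall hC)

/-- Fix `t > 0`. If `P(t,·)` vanishes at `-∞`, then
`∫ u(t,x) dx = 0` is equivalent to
`(d/dt) ∫ u(t,x)² dx + 2ε ∫ (∂ₓu(t,x))² dx = 0`. -/
theorem stmt0
    (γ ε β : ℝ) (hγ : γ ≠ 0) (hε : 0 < ε) (hβ : 0 < β)
    (u : ℝ → ℝ → ℝ)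
    (hu_smooth : ContDiff ℝ (⊤ : ℕ∞) (Function.uncurry u))
    (hPDE : ∀ t > (0:ℝ), ∀ x : ℝ,
      deriv (fun τ => u τ x) t + u t x * deriv (u t) x
        - β * iteratedDeriv 3 (u t) x
      = γ * Pfun u t x + ε * iteratedDeriv 2 (u t) x)
    (hint : ∀ t ≥ (0:ℝ), ∀ k ≤ 3,
      Integrable (iteratedDeriv k (u t)) ∧ MemLp (iteratedDeriv k (u t)) 2)
    (hdecay : ∀ t ≥ (0:ℝ), ∀ k ≤ 3,
      Tendsto (iteratedDeriv k (u t)) atTop (nhds 0) ∧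
      Tendsto (iteratedDeriv k (u t)) atBot (nhds 0))
    (hdecay_t : ∀ t ≥ (0:ℝ),
      Tendsto (fun x => deriv (fun τ => u τ x) t) atTop (nhds 0) ∧
      Tendsto (fun x => deriv (fun τ => u τ x) t) atBot (nhds 0))
    (hDUI : ∀ t > (0:ℝ),
      HasDerivAt (fun τ => ∫ x : ℝ, (u τ x)^2)
        (∫ x : ℝ, 2 * u t x * deriv (fun τ => u τ x) t) t)
    (t : ℝ) (ht : 0 < t)
    (hPlim : Tendsto (fun x => Pfun u t x) atBot (nhds 0)) :
    ((∫ x : ℝ, u t x) = 0) ↔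
      (deriv (fun τ => ∫ x : ℝ, (u τ x)^2) t
        + 2 * ε * ∫ x : ℝ, (deriv (u t) x)^2 = 0) := by
  have ht' : (0:ℝ) ≤ t := ht.le
  -- smoothness in x
  have hvc : ContDiff ℝ (⊤ : ℕ∞) (u t) := by
    have : (u t) = (Function.uncurry u) ∘ (fun x : ℝ => (t, x)) := rfl
    rw [this]
    exact hu_smooth.comp (contDiff_prodMk_right t)
  have hck : ∀ k : ℕ, ContDiff ℝ (⊤:ℕ∞) (iteratedDeriv k (u t)) := fun k => by
    rw [iteratedDeriv_eq_iterate]; exact ContDiff.iterate_deriv k (hvc.of_le (by simp))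
  have hD : ∀ (k : ℕ) (x : ℝ),
      HasDerivAt (iteratedDeriv k (u t)) (iteratedDeriv (k+1) (u t) x) x := fun k x => by
    rw [iteratedDeriv_succ]
    exact (((hck k).differentiable (by simp)) x).hasDerivAt
  have hD0 : ∀ x, HasDerivAt (u t) (deriv (u t) x) x := fun x =>
    ((hvc.differentiable (by simp)) x).hasDerivAt
  have hD1 : ∀ x, HasDerivAt (deriv (u t)) (iteratedDeriv 2 (u t) x) x := by
    have := hD 1; rwa [iteratedDeriv_one] at this
  have hD2 : ∀ x, HasDerivAt (iteratedDeriv 2 (u t)) (iteratedDeriv 3 (u t) x) x := by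
    have := hD 2; norm_num at this; exact this
  -- integrability / L² / decay hypotheses at `t`
  obtain ⟨hInt0, hL20⟩ := hint t ht' 0 (by norm_num)
  obtain ⟨hInt1, hL21⟩ := hint t ht' 1 (by norm_num)
  obtain ⟨hInt2, hL22⟩ := hint t ht' 2 (by norm_num)
  obtain ⟨hInt3, hL23⟩ := hint t ht' 3 (by norm_num)
  obtain ⟨hT0, hB0⟩ := hdecay t ht' 0 (by norm_num)
  obtain ⟨hT1, hB1⟩ := hdecay t ht' 1 (by norm_num)
  obtain ⟨hT2, hB2⟩ := hdecay t ht' 2 (by norm_num)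
  obtain ⟨hT3, hB3⟩ := hdecay t ht' 3 (by norm_num)
  rw [iteratedDeriv_zero] at hInt0 hL20 hT0 hB0
  rw [iteratedDeriv_one] at hInt1 hL21 hT1 hB1
  have hvb : ∃ C, ∀ x, ‖u t x‖ ≤ C := exists_bound_of_tendsto hvc.continuous hT0 hB0
  have hmeas : AEStronglyMeasurable (u t) volume := hvc.continuous.aestronglyMeasurable
  -- properties of P
  have hPd : ∀ x, HasDerivAt (Pfun u t) (u t x) x := fun x =>
    intervalIntegral.integral_hasDerivAt_right
      (hvc.continuous.intervalIntegrable _ _)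
      (hvc.continuous.stronglyMeasurableAtFilter _ _)
      hvc.continuous.continuousAt
  have hPdiff : Differentiable ℝ (Pfun u t) := fun x => (hPd x).differentiableAt
  have hPc : Continuous (Pfun u t) := hPdiff.continuous
  set M := ∫ x in Set.Ioi (0:ℝ), u t x with hM
  have hPtop : Tendsto (Pfun u t) atTop (nhds M) :=
    intervalIntegral_tendsto_integral_Ioi 0 hInt0.integrableOn tendsto_id
  have hPbot' : Tendsto (Pfun u t) atBot (nhds (-(∫ x in Set.Iic (0:ℝ), u t x))) := by
    have h1 : Tendsto (fun x => ∫ y in x..(0:ℝ), u t y) atBot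
        (nhds (∫ x in Set.Iic (0:ℝ), u t x)) :=
      intervalIntegral_tendsto_integral_Iic 0 hInt0.integrableOn tendsto_id
    have h2 : (Pfun u t) = fun x => -(∫ y in x..(0:ℝ), u t y) := by
      funext x
      show (∫ y in (0:ℝ)..x, u t y) = -∫ y in x..(0:ℝ), u t y
      rw [intervalIntegral.integral_symm]
    rw [h2]; exact h1.neg
  have hIic0 : (∫ x in Set.Iic (0:ℝ), u t x) = 0 := by
    have h := tendsto_nhds_unique hPlim hPbot'
    linarith
  have hTotal : (∫ x : ℝ, u t x) = M := by
    rw [← integral_Iic_add_Ioi (b := (0:ℝ)) hInt0.integrableOn hInt0.integrableOn, hIic0,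
      zero_add]
  have hPbot : Tendsto (Pfun u t) atBot (nhds 0) := hPlim
  have hPbdd : ∃ C, ∀ x, ‖Pfun u t x‖ ≤ C := exists_bound_of_tendsto hPc hPtop hPbot
  -- integrabilities of the products
  have hIuu1 : Integrable (fun x => u t x * deriv (u t) x) :=
    bdd_mul_integrable hInt1 hmeas hvb
  have hIa_int : Integrable (fun x => (u t x)^2 * deriv (u t) x) := by
    have := bdd_mul_integrable hIuu1 hmeas hvb
    exact this.congr (Eventually.of_forall fun x => by ring)
  have hIu2 : Integrable (fun x => u t x * iteratedDeriv 2 (u t) x) :=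
    bdd_mul_integrable hInt2 hmeas hvb
  have hIu3 : Integrable (fun x => u t x * iteratedDeriv 3 (u t) x) :=
    bdd_mul_integrable hInt3 hmeas hvb
  have hIuP : Integrable (fun x => u t x * Pfun u t x) := by
    have := bdd_mul_integrable hInt0 hPc.aestronglyMeasurable hPbdd
    exact this.congr (Eventually.of_forall fun x => by ring)
  have hId1sq : Integrable (fun x => (deriv (u t) x)^2) := hL21.integrable_sq
  -- (a) ∫ u² uₓ = 0
  have hIa : (∫ x : ℝ, (u t x)^2 * deriv (u t) x) = 0 := by
    have hderiv : ∀ x, HasDerivAt (fun y => (u t y)^3 / 3)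
        ((u t x)^2 * deriv (u t) x) x := fun x => by
      exact (((hD0 x).pow 3).div_const 3).congr_deriv (by push_cast; norm_num; try ring)
    have htop : Tendsto (fun y => (u t y)^3/3) atTop (nhds 0) := by
      have := (hT0.pow 3).div_const 3; simpa using this
    have hbot : Tendsto (fun y => (u t y)^3/3) atBot (nhds 0) := by
      have := (hB0.pow 3).div_const 3; simpa using this
    have := integral_of_hasDerivAt_of_tendsto hderiv hIa_int hbot htop
    simpa using this
  -- (b) ∫ u uₓₓₓ = 0
  have hIb : (∫ x : ℝ, u t x * iteratedDeriv 3 (u t) x) = 0 := by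
    have hderiv : ∀ x, HasDerivAt
        (fun y => u t y * iteratedDeriv 2 (u t) y - (deriv (u t) y)^2 / 2)
        (u t x * iteratedDeriv 3 (u t) x) x := fun x => by
      exact (((hD0 x).mul (hD2 x)).sub (((hD1 x).pow 2).div_const 2)).congr_deriv
        (by push_cast; norm_num; try ring)
    have htop : Tendsto (fun y => u t y * iteratedDeriv 2 (u t) y - (deriv (u t) y)^2/2)
        atTop (nhds 0) := by
      have := (hT0.mul hT2).sub ((hT1.pow 2).div_const 2); simpa using this
    have hbot : Tendsto (fun y => u t y * iteratedDeriv 2 (u t) y - (deriv (u t) y)^2/2)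
        atBot (nhds 0) := by
      have := (hB0.mul hB2).sub ((hB1.pow 2).div_const 2); simpa using this
    have := integral_of_hasDerivAt_of_tendsto hderiv hIu3 hbot htop
    simpa using this
  -- (c) ∫ u uₓₓ = - ∫ uₓ²
  have hIc : (∫ x : ℝ, u t x * iteratedDeriv 2 (u t) x)
      = - ∫ x : ℝ, (deriv (u t) x)^2 := by
    have hderiv : ∀ x, HasDerivAt (fun y => u t y * deriv (u t) y)
        ((deriv (u t) x)^2 + u t x * iteratedDeriv 2 (u t) x) x := fun x => by
      have h := (hD0 x).mul (hD1 x)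
      have e : deriv (u t) x * deriv (u t) x + u t x * iteratedDeriv 2 (u t) x
          = (deriv (u t) x)^2 + u t x * iteratedDeriv 2 (u t) x := by ring
      rwa [e] at h
    have htop : Tendsto (fun y => u t y * deriv (u t) y) atTop (nhds 0) := by
      have := hT0.mul hT1; simpa using this
    have hbot : Tendsto (fun y => u t y * deriv (u t) y) atBot (nhds 0) := by
      have := hB0.mul hB1; simpa using this
    have h0 := integral_of_hasDerivAt_of_tendsto hderiv (hId1sq.add hIu2) hbot htop
    rw [integral_add hId1sq hIu2] at h0
    simp only [sub_zero] at h0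
    linarith
  -- (d) ∫ u P = M²/2
  have hId : (∫ x : ℝ, u t x * Pfun u t x) = M^2 / 2 := by
    have hderiv : ∀ x, HasDerivAt (fun y => (Pfun u t y)^2 / 2)
        (u t x * Pfun u t x) x := fun x => by
      exact (((hPd x).pow 2).div_const 2).congr_deriv (by push_cast; norm_num; try ring)
    have htop : Tendsto (fun y => (Pfun u t y)^2/2) atTop (nhds (M^2/2)) :=
      (hPtop.pow 2).div_const 2
    have hbot : Tendsto (fun y => (Pfun u t y)^2/2) atBot (nhds 0) := by
      have := (hPbot.pow 2).div_const 2; simpa using this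
    have := integral_of_hasDerivAt_of_tendsto hderiv hIuP hbot htop
    simpa using this
  -- time derivative of the energy
  have hder : deriv (fun τ => ∫ x : ℝ, (u τ x)^2) t
      = ∫ x : ℝ, 2 * u t x * deriv (fun τ => u τ x) t := (hDUI t ht).deriv
  have hut : ∀ x, deriv (fun τ => u τ x) t
      = γ * Pfun u t x + ε * iteratedDeriv 2 (u t) x + β * iteratedDeriv 3 (u t) x
        - u t x * deriv (u t) x := by
    intro x; have h := hPDE t ht x; linarith
  have hfun : (fun x : ℝ => 2 * u t x * deriv (fun τ => u τ x) t)
      = fun x : ℝ => (2*γ) * (u t x * Pfun u t x)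
        + ((2*ε) * (u t x * iteratedDeriv 2 (u t) x)
        + ((2*β) * (u t x * iteratedDeriv 3 (u t) x)
        - 2 * ((u t x)^2 * deriv (u t) x))) := by
    funext x; rw [hut x]; ring
  have hval : (∫ x : ℝ, 2 * u t x * deriv (fun τ => u τ x) t)
      = γ * M^2 - 2 * ε * ∫ x : ℝ, (deriv (u t) x)^2 := by
    have hg1 : Integrable (fun x : ℝ => (2*β) * (u t x * iteratedDeriv 3 (u t) x)
        - 2 * ((u t x)^2 * deriv (u t) x)) := (hIu3.const_mul _).sub (hIa_int.const_mul _)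
    have hg2 : Integrable (fun x : ℝ => (2*ε) * (u t x * iteratedDeriv 2 (u t) x)
        + ((2*β) * (u t x * iteratedDeriv 3 (u t) x)
          - 2 * ((u t x)^2 * deriv (u t) x))) := (hIu2.const_mul _).add hg1
    rw [hfun]
    rw [integral_add (hIuP.const_mul _) hg2]
    rw [integral_add (hIu2.const_mul _) hg1]
    rw [integral_sub (hIu3.const_mul _) (hIa_int.const_mul _)]
    rw [MeasureTheory.integral_const_mul, MeasureTheory.integral_const_mul, MeasureTheory.integral_const_mul,
      MeasureTheory.integral_const_mul]
    rw [hIa, hIb, hIc, hId]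
    ring
  rw [hTotal, hder, hval]
  constructor
  · intro h; rw [h]; ring
  · intro h
    have h2 : γ * M^2 = 0 := by linarith
    have h3 : M^2 = 0 := by
      rcases mul_eq_zero.mp h2 with h | h
      · exact absurd h hγ
      · exact h
    exact pow_eq_zero_iff (by norm_num) |>.mp h3
end

section
/- Fix t > 0 and assume the limits P(t,±∞) := lim_{x→±∞} P(t,x) exist. Then (d/dt) ∫_ℝ u(t,x)² dx + 2ε ∫_ℝ (∂ₓu(t,x))² dx = γ ( P(t,∞)² − P(t,−∞)² ). -/
open MeasureTheory Filter intervalIntegral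

/-- Product of two L² functions is integrable. -/
lemma l2mul {f g : ℝ → ℝ} (hf : MemLp f 2 (volume : Measure ℝ))
    (hg : MemLp g 2 (volume : Measure ℝ)) :
    Integrable (fun x => f x * g x) := by
  have h : MemLp (g • f) 1 (volume : Measure ℝ) :=
    hf.smul hg
  exact (memLp_one_iff_integrable.mp h).congr
    (Eventually.of_forall fun x => mul_comm (g x) (f x))

/-- A continuous function tending to 0 at both ends is bounded. -/
lemma bdd_of_tendsto {f : ℝ → ℝ} (hc : Continuous f)
    (h1 : Tendsto f atTop (nhds 0)) (h2 : Tendsto f atBot (nhds 0)) :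
    ∃ C, ∀ x, ‖f x‖ ≤ C := by
  have e1 : ∀ᶠ x in atTop, ‖f x‖ ≤ 1 := by
    have := Filter.Tendsto.eventually_le_const (v := ‖(0:ℝ)‖) (u := (1:ℝ))
      (by simp) h1.norm
    simpa using this
  have e2 : ∀ᶠ x in atBot, ‖f x‖ ≤ 1 := by
    have := Filter.Tendsto.eventually_le_const (v := ‖(0:ℝ)‖) (u := (1:ℝ))
      (by simp) h2.norm
    simpa using this
  obtain ⟨A, hA⟩ := eventually_atTop.mp e1
  obtain ⟨B, hB⟩ := eventually_atBot.mp e2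
  obtain ⟨C, hC⟩ := (isCompact_Icc (a := B) (b := A)).exists_bound_of_continuousOn
    hc.continuousOn
  refine ⟨max C 1, fun x => ?_⟩
  rcases le_total x B with h | h
  · exact (hB x h).trans (le_max_right _ _)
  rcases le_total A x with h' | h'
  · exact (hA x h').trans (le_max_right _ _)
  · exact (hC x ⟨h, h'⟩).trans (le_max_left _ _)

/-- The FTC computation at the heart of the energy identity. -/
lemma aux_main {γ ε β Pp Pm : ℝ} {f0 f1 f2 f3 P : ℝ → ℝ}
    (h0 : ∀ x, HasDerivAt f0 (f1 x) x) (h1 : ∀ x, HasDerivAt f1 (f2 x) x)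
    (h2 : ∀ x, HasDerivAt f2 (f3 x) x) (hPd : ∀ x, HasDerivAt P (f0 x) x)
    (hR : Integrable (fun x => 2*γ*(f0 x * P x) + 2*ε*(f0 x * f2 x)
      + 2*β*(f0 x * f3 x) - 2*(f0 x ^ 2 * f1 x) + 2*ε*(f1 x ^ 2)))
    (hT0 : Tendsto f0 atTop (nhds 0)) (hB0 : Tendsto f0 atBot (nhds 0))
    (hT1 : Tendsto f1 atTop (nhds 0)) (hB1 : Tendsto f1 atBot (nhds 0))
    (hT2 : Tendsto f2 atTop (nhds 0)) (hB2 : Tendsto f2 atBot (nhds 0))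
    (hPp : Tendsto P atTop (nhds Pp)) (hPm : Tendsto P atBot (nhds Pm)) :
    ∫ x, (2*γ*(f0 x * P x) + 2*ε*(f0 x * f2 x)
      + 2*β*(f0 x * f3 x) - 2*(f0 x ^ 2 * f1 x) + 2*ε*(f1 x ^ 2))
      = γ * Pp ^ 2 - γ * Pm ^ 2 := by
  set G : ℝ → ℝ := fun y =>
    γ * P y ^ 2 + 2*ε*(f0 y * f1 y) + 2*β*(f0 y * f2 y - f1 y ^ 2 / 2)
      - (2/3) * f0 y ^ 3 with hGdef
  have hG : ∀ x, HasDerivAt G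
      (2*γ*(f0 x * P x) + 2*ε*(f0 x * f2 x)
        + 2*β*(f0 x * f3 x) - 2*(f0 x ^ 2 * f1 x) + 2*ε*(f1 x ^ 2)) x := by
    intro x
    have hd := ((((hPd x).pow 2).const_mul γ).add
        (((h0 x).mul (h1 x)).const_mul (2*ε))).add
        ((((h0 x).mul (h2 x)).sub (((h1 x).pow 2).div_const 2)).const_mul (2*β))
        |>.sub (((h0 x).pow 3).const_mul (2/3))
    refine hd.congr_deriv ?_
    norm_num
    ring
  have hTop : Tendsto G atTop (nhds (γ * Pp ^ 2)) := by
    have hd := (((hPp.pow 2).const_mul γ).add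
        ((hT0.mul hT1).const_mul (2*ε))).add
        (((hT0.mul hT2).sub ((hT1.pow 2).div_const 2)).const_mul (2*β))
        |>.sub ((hT0.pow 3).const_mul (2/3))
    simpa using hd
  have hBot : Tendsto G atBot (nhds (γ * Pm ^ 2)) := by
    have hd := (((hPm.pow 2).const_mul γ).add
        ((hB0.mul hB1).const_mul (2*ε))).add
        (((hB0.mul hB2).sub ((hB1.pow 2).div_const 2)).const_mul (2*β))
        |>.sub ((hB0.pow 3).const_mul (2/3))
    simpa using hd
  exact integral_of_hasDerivAt_of_tendsto hG hR hBot hTop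

/-- Fix `t > 0` and assume the limits `P(t,±∞)` exist. Then
`(d/dt) ∫ u(t,x)² dx + 2ε ∫ (∂ₓu(t,x))² dx = γ (P(t,∞)² − P(t,−∞)²)`. -/
theorem stmt1
    (γ ε β : ℝ) (hε : 0 < ε) (hβ : 0 < β)
    (u : ℝ → ℝ → ℝ)
    (hu_smooth : ContDiff ℝ (⊤ : ℕ∞) (Function.uncurry u))
    (hPDE : ∀ t > (0:ℝ), ∀ x : ℝ,
      deriv (fun τ => u τ x) t + u t x * deriv (u t) x
        - β * iteratedDeriv 3 (u t) x
      = γ * Pfun u t x + ε * iteratedDeriv 2 (u t) x)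
    (hint : ∀ t ≥ (0:ℝ), ∀ k ≤ 3,
      Integrable (iteratedDeriv k (u t)) ∧ MemLp (iteratedDeriv k (u t)) 2)
    (hdecay : ∀ t ≥ (0:ℝ), ∀ k ≤ 3,
      Tendsto (iteratedDeriv k (u t)) atTop (nhds 0) ∧
      Tendsto (iteratedDeriv k (u t)) atBot (nhds 0))
    (hDUI : ∀ t > (0:ℝ),
      HasDerivAt (fun τ => ∫ x : ℝ, (u τ x)^2)
        (∫ x : ℝ, 2 * u t x * deriv (fun τ => u τ x) t) t)
    (t : ℝ) (ht : 0 < t)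
    (Pp Pm : ℝ)
    (hPp : Tendsto (fun x => Pfun u t x) atTop (nhds Pp))
    (hPm : Tendsto (fun x => Pfun u t x) atBot (nhds Pm)) :
    deriv (fun τ => ∫ x : ℝ, (u τ x)^2) t
      + 2 * ε * ∫ x : ℝ, (deriv (u t) x)^2
      = γ * (Pp ^ 2 - Pm ^ 2) := by
  -- smoothness of u t and its derivatives
  have hct : ContDiff ℝ (⊤ : ℕ∞) (u t) :=
    hu_smooth.comp (contDiff_const.prodMk contDiff_id)
  have hct' : ContDiff ℝ ((⊤ : ℕ∞) : WithTop ℕ∞) (u t) := hct.of_le (by simp)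
  have hdiff0 : Differentiable ℝ (u t) := (contDiff_infty_iff_deriv.mp hct').1
  have hct1 : ContDiff ℝ ((⊤ : ℕ∞) : WithTop ℕ∞) (deriv (u t)) :=
    (contDiff_infty_iff_deriv.mp hct').2
  have hdiff1 : Differentiable ℝ (deriv (u t)) := (contDiff_infty_iff_deriv.mp hct1).1
  have hct2 : ContDiff ℝ ((⊤ : ℕ∞) : WithTop ℕ∞) (deriv (deriv (u t))) :=
    (contDiff_infty_iff_deriv.mp hct1).2
  have hdiff2 : Differentiable ℝ (deriv (deriv (u t))) :=
    (contDiff_infty_iff_deriv.mp hct2).1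
  -- iterated derivative identifications
  have hIT2 : iteratedDeriv 2 (u t) = deriv (deriv (u t)) := by
    rw [iteratedDeriv_succ, iteratedDeriv_one]
  have hIT3 : iteratedDeriv 3 (u t) = deriv (deriv (deriv (u t))) := by
    rw [iteratedDeriv_succ, hIT2]
  -- integrability and MemLp of derivatives
  obtain ⟨hi0, hm0⟩ := hint t ht.le 0 (by norm_num)
  obtain ⟨hi1, hm1⟩ := hint t ht.le 1 (by norm_num)
  obtain ⟨hi2, hm2⟩ := hint t ht.le 2 (by norm_num)
  obtain ⟨hi3, hm3⟩ := hint t ht.le 3 (by norm_num)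
  rw [iteratedDeriv_zero] at hi0 hm0
  rw [iteratedDeriv_one] at hi1 hm1
  rw [hIT2] at hi2 hm2
  rw [hIT3] at hi3 hm3
  -- decay
  obtain ⟨hT0, hB0⟩ := hdecay t ht.le 0 (by norm_num)
  obtain ⟨hT1, hB1⟩ := hdecay t ht.le 1 (by norm_num)
  obtain ⟨hT2, hB2⟩ := hdecay t ht.le 2 (by norm_num)
  rw [iteratedDeriv_zero] at hT0 hB0
  rw [iteratedDeriv_one] at hT1 hB1
  rw [hIT2] at hT2 hB2
  -- derivative facts
  have h0 : ∀ x, HasDerivAt (u t) (deriv (u t) x) x := fun x => (hdiff0 x).hasDerivAt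
  have h1 : ∀ x, HasDerivAt (deriv (u t)) (deriv (deriv (u t)) x) x :=
    fun x => (hdiff1 x).hasDerivAt
  have h2 : ∀ x, HasDerivAt (deriv (deriv (u t))) (deriv (deriv (deriv (u t))) x) x :=
    fun x => (hdiff2 x).hasDerivAt
  have hPd : ∀ x, HasDerivAt (fun x => Pfun u t x) (u t x) x := by
    intro x
    exact intervalIntegral.integral_hasDerivAt_right hi0.intervalIntegrable
      ⟨Set.univ, Filter.univ_mem, hi0.1.restrict⟩ hct.continuous.continuousAt
  have hPc : Continuous (fun x => Pfun u t x) :=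
    continuous_iff_continuousAt.mpr fun x => (hPd x).continuousAt
  -- bound on P
  have hPbd : ∀ x, ‖Pfun u t x‖ ≤ ∫ y, ‖u t y‖ := by
    intro x
    calc ‖Pfun u t x‖ ≤ ∫ y in Set.uIoc 0 x, ‖u t y‖ :=
          intervalIntegral.norm_integral_le_integral_norm_uIoc
      _ ≤ ∫ y, ‖u t y‖ :=
          setIntegral_le_integral hi0.norm (Eventually.of_forall fun y => norm_nonneg _)
  -- bound on u
  have hbd0 : ∃ C, ∀ x, ‖u t x‖ ≤ C := bdd_of_tendsto hct.continuous hT0 hB0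
  -- integrable products
  have hIf0f1 : Integrable (fun x => u t x * deriv (u t) x) := l2mul hm0 hm1
  have hIf0f2 : Integrable (fun x => u t x * deriv (deriv (u t)) x) := l2mul hm0 hm2
  have hIf1f1 : Integrable (fun x => deriv (u t) x * deriv (u t) x) := l2mul hm1 hm1
  have hIf1sq : Integrable (fun x => (deriv (u t) x) ^ 2) :=
    hIf1f1.congr (Eventually.of_forall fun x => (pow_two _).symm)
  have hIf0f3 : Integrable (fun x => u t x * deriv (deriv (deriv (u t))) x) :=
    hi3.bdd_mul hct.continuous.aestronglyMeasurable (ae_of_all _ hbd0.choose_spec)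
  have hIf0sqf1 : Integrable (fun x => u t x ^ 2 * deriv (u t) x) := by
    have := hIf0f1.bdd_mul hct.continuous.aestronglyMeasurable (ae_of_all _ hbd0.choose_spec)
    exact this.congr (Eventually.of_forall fun x => by ring)
  have hIPf0 : Integrable (fun x => u t x * Pfun u t x) := by
    have := hi0.bdd_mul hPc.aestronglyMeasurable (ae_of_all _ hPbd)
    exact this.congr (Eventually.of_forall fun x => mul_comm _ _)
  -- integrability of R
  have hIR : Integrable (fun x => 2*γ*(u t x * Pfun u t x)
      + 2*ε*(u t x * deriv (deriv (u t)) x)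
      + 2*β*(u t x * deriv (deriv (deriv (u t))) x)
      - 2*(u t x ^ 2 * deriv (u t) x) + 2*ε*((deriv (u t) x) ^ 2)) :=
    ((((hIPf0.const_mul (2*γ)).add (hIf0f2.const_mul (2*ε))).add
      (hIf0f3.const_mul (2*β))).sub (hIf0sqf1.const_mul 2)).add
      (hIf1sq.const_mul (2*ε))
  -- the key FTC identity
  have key := aux_main h0 h1 h2 hPd hIR hT0 hB0 hT1 hB1 hT2 hB2 hPp hPm
  -- pointwise rewriting of the time derivative integrand using the PDE
  have hpt : ∀ x, 2 * u t x * deriv (fun τ => u τ x) t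
      = (2*γ*(u t x * Pfun u t x)
        + 2*ε*(u t x * deriv (deriv (u t)) x)
        + 2*β*(u t x * deriv (deriv (deriv (u t))) x)
        - 2*(u t x ^ 2 * deriv (u t) x) + 2*ε*((deriv (u t) x) ^ 2))
        - 2*ε*((deriv (u t) x) ^ 2) := by
    intro x
    have h := hPDE t ht x
    rw [hIT2, hIT3] at h
    linear_combination (2 * u t x) * h
  have hderiv_eq : deriv (fun τ => ∫ x : ℝ, (u τ x)^2) t
      = ∫ x : ℝ, 2 * u t x * deriv (fun τ => u τ x) t := (hDUI t ht).deriv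
  have hsplit : (∫ x : ℝ, 2 * u t x * deriv (fun τ => u τ x) t)
      = (∫ x, (2*γ*(u t x * Pfun u t x)
        + 2*ε*(u t x * deriv (deriv (u t)) x)
        + 2*β*(u t x * deriv (deriv (deriv (u t))) x)
        - 2*(u t x ^ 2 * deriv (u t) x) + 2*ε*((deriv (u t) x) ^ 2)))
        - 2*ε*∫ x, (deriv (u t) x) ^ 2 := by
    rw [show (fun x => 2 * u t x * deriv (fun τ => u τ x) t)
        = fun x => (2*γ*(u t x * Pfun u t x)
          + 2*ε*(u t x * deriv (deriv (u t)) x)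
          + 2*β*(u t x * deriv (deriv (deriv (u t))) x)
          - 2*(u t x ^ 2 * deriv (u t) x) + 2*ε*((deriv (u t) x) ^ 2))
          - 2*ε*((deriv (u t) x) ^ 2) from funext hpt]
    rw [integral_sub hIR (hIf1sq.const_mul (2*ε)), MeasureTheory.integral_const_mul]
  rw [hderiv_eq, hsplit, key]
  ring
end

section
/- Let A > 0 and B > 0 and define g : ℝ → ℝ by g(X) = X⁴ − A·X − B. Then g has exactly two real zeros D and C, they satisfy D < 0 < C, and for every X ∈ ℝ one has g(X) ≤ 0 if and only if D ≤ X ≤ C. -/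
/-!
Roots exist by the intermediate value theorem: `g 0 = -B < 0` while `g` is positive far out on
both sides. Two roots `D ≠ C` determine `A` and `B`, and then
`g X = (X - D) (X - C) (X² + (D + C) X + D² + D C + C²)` with a quadratic factor that is
everywhere positive, so `g` vanishes only at `D` and `C` and has the sign of `(X - D) (X - C)`.
-/

lemma exists_pos_root_quartic (A : ℝ) {B : ℝ} (hB : 0 < B) :
    ∃ C : ℝ, 0 < C ∧ C ^ 4 - A * C - B = 0 := by
  set c := |A| + B + 1
  have hc : 1 ≤ c := by linarith [abs_nonneg A]
  have hgc : 0 < c ^ 4 - A * c - B := by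
    have hc2 : c ^ 2 ≤ c ^ 4 := pow_le_pow_right₀ hc (by norm_num)
    -- `c⁴ ≥ c² = c · c > (|A| + B) c ≥ A c + B`
    nlinarith [le_abs_self A, abs_nonneg A]
  have hg0 : (0 : ℝ) ^ 4 - A * 0 - B < 0 := by linarith
  obtain ⟨C, hC, hC0⟩ := intermediate_value_Ioo (f := fun x : ℝ => x ^ 4 - A * x - B)
    (by linarith) (by fun_prop) ⟨hg0, hgc⟩
  exact ⟨C, hC.1, hC0⟩

section QuarticFactorization

variable {R : Type*} [CommRing R] {A B D C : R}

lemma quartic_eq_mul_of_roots [IsDomain R] (hD : D ^ 4 - A * D - B = 0)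
    (hC : C ^ 4 - A * C - B = 0) (hDC : D ≠ C) (X : R) :
    X ^ 4 - A * X - B
      = (X - D) * (X - C) * (X ^ 2 + (D + C) * X + (D ^ 2 + D * C + C ^ 2)) := by
  have hA : A = (D + C) * (D ^ 2 + C ^ 2) :=
    mul_right_cancel₀ (sub_ne_zero.2 hDC) (by linear_combination hC - hD)
  linear_combination hD - (X - D) * hA

lemma quadratic_factor_pos [LinearOrder R] [IsStrictOrderedRing R] (hDC : D ≠ C) (X : R) :
    0 < X ^ 2 + (D + C) * X + (D ^ 2 + D * C + C ^ 2) := by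
  have hsq : 0 < (D - C) ^ 2 := pow_two_pos_of_ne_zero (sub_ne_zero.2 hDC)
  -- four times the quadratic is `(2X + D + C)² + 2 (D + C)² + (D - C)²`
  nlinarith [sq_nonneg (2 * X + D + C), sq_nonneg (D + C)]

end QuarticFactorization

theorem stmt8_general (A B : ℝ) (hB : 0 < B) :
    ∃ D C : ℝ, D < 0 ∧ 0 < C ∧
      (D ^ 4 - A * D - B = 0) ∧ (C ^ 4 - A * C - B = 0) ∧
      (∀ X : ℝ, X ^ 4 - A * X - B = 0 → X = D ∨ X = C) ∧
      (∀ X : ℝ, X ^ 4 - A * X - B ≤ 0 ↔ D ≤ X ∧ X ≤ C) := by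
  obtain ⟨C, hC0, hC⟩ := exists_pos_root_quartic A hB
  obtain ⟨E, hE0, hE⟩ := exists_pos_root_quartic (-A) hB
  have hD : (-E) ^ 4 - A * (-E) - B = 0 := by linear_combination hE
  have hDC : -E < C := by linarith
  have hfactor := quartic_eq_mul_of_roots hD hC hDC.ne
  have hquad := quadratic_factor_pos hDC.ne
  refine ⟨-E, C, by linarith, hC0, hD, hC, fun X hX => ?_, fun X => ?_⟩
  · rw [hfactor, mul_eq_zero_iff_right (hquad X).ne', mul_eq_zero, sub_eq_zero,
      sub_eq_zero] at hX
    exact hX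
  · rw [hfactor, ← sub_mul_sub_nonpos_iff X hDC.le]
    exact ⟨fun h => nonpos_of_mul_nonpos_left h (hquad X),
      fun h => mul_nonpos_of_nonpos_of_nonneg h (hquad X).le⟩

/-- for `A, B > 0`, the quartic `g(X) = X⁴ − A·X − B` has exactly two
real zeros `D < 0 < C`, and `g(X) ≤ 0` if and only if `D ≤ X ≤ C`. -/
theorem stmt8 (A B : ℝ) (hA : 0 < A) (hB : 0 < B) :
    ∃ D C : ℝ, D < 0 ∧ 0 < C ∧
      (D ^ 4 - A * D - B = 0) ∧ (C ^ 4 - A * C - B = 0) ∧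
      (∀ X : ℝ, X ^ 4 - A * X - B = 0 → X = D ∨ X = C) ∧
      (∀ X : ℝ, X ^ 4 - A * X - B ≤ 0 ↔ D ≤ X ∧ X ≤ C) :=
  stmt8_general A B hB
end
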